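/- arXiv:1703.09276 — 4 statements merged into one kernel-verified Lean document; each statement's English description precedes it below -/
import Mathlib

section
/- Let U be the group of upper unitriangular n×n real matrices and w a permutation matrix. Set U⁺ = U ∩ wUw⁻¹ and U⁻ = U ∩ wUᵀw⁻¹ (where Uᵀ denotes the set of transposes of elements of U, i.e. lower unitriangular matrices). Then every x ∈ U has a unique factorization x = x₋ x₊ with x₋ ∈ U⁻ and x₊ ∈ U⁺. -/
/-!
For upper unitriangular `a`, `b` and `i < j`,
`(a * b) i j = a i j + b i j + ∑_{i < k < j} a i k * b k j`.
Conjugating by the involution `w` shows that `U⁻` is the set of `a ∈ U` vanishing at the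
positions `i < j` with `w i < w j`, and `U⁺` the set of `b ∈ U` vanishing at those with
`w j < w i`. So at every position above the diagonal exactly one of `x₋ i j`, `x₊ i j` is free,
and the identity above determines it from entries closer to the diagonal; induction on `j - i`
gives existence and uniqueness. Only this splitting of the positions matters, so the
factorization exists and is unique for any partition of the positions above the diagonal into
two classes, over any ring.
-/

open Matrix

/-- Upper unitriangular: upper triangular with unit diagonal. -/
def IsUniUpper {n : ℕ} (x : Matrix (Fin n) (Fin n) ℝ) : Prop :=
  (∀ i j : Fin n, j < i → x i j = 0) ∧ ∀ i : Fin n, x i i = 1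

open Finset

namespace Matrix

section LinearOrder

variable {ι R : Type*} [LinearOrder ι]

theorem BlockTriangular.mul_apply_eq_sum_Icc [Fintype ι] [LocallyFiniteOrder ι]
    [NonUnitalNonAssocSemiring R] {a b : Matrix ι ι R}
    (ha : a.BlockTriangular id) (hb : b.BlockTriangular id) (i j : ι) :
    (a * b) i j = ∑ k ∈ Icc i j, a i k * b k j := by
  rw [mul_apply]
  refine (sum_subset (subset_univ _) fun k _ hk => ?_).symm
  rcases not_and_or.1 (mem_Icc.not.1 hk) with hik | hkj
  · rw [ha (not_le.1 hik), zero_mul]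
  · rw [hb (not_le.1 hkj), mul_zero]

theorem BlockTriangular.mul_apply_self [Fintype ι] [LocallyFiniteOrder ι]
    [NonUnitalNonAssocSemiring R] {a b : Matrix ι ι R}
    (ha : a.BlockTriangular id) (hb : b.BlockTriangular id) (i : ι) :
    (a * b) i i = a i i * b i i := by
  rw [ha.mul_apply_eq_sum_Icc hb, Icc_self, sum_singleton]

theorem BlockTriangular.mul_apply_of_lt [Fintype ι] [LocallyFiniteOrder ι] [NonAssocSemiring R]
    {a b : Matrix ι ι R} (ha : a.BlockTriangular id) (hb : b.BlockTriangular id)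
    (ha₁ : ∀ i, a i i = 1) (hb₁ : ∀ i, b i i = 1) {i j : ι} (hij : i < j) :
    (a * b) i j = b i j + a i j + ∑ k ∈ Ioo i j, a i k * b k j := by
  rw [ha.mul_apply_eq_sum_Icc hb, Icc_eq_cons_Ioc hij.le, sum_cons, Ioc_eq_cons_Ioo hij,
    sum_cons, ha₁, hb₁, one_mul, mul_one, add_assoc]

def IsUnitriangularWithin [Zero R] [One R] (P : ι → ι → Prop) (a : Matrix ι ι R) : Prop :=
  a.BlockTriangular id ∧ (∀ i, a i i = 1) ∧ ∀ i j, i < j → ¬P i j → a i j = 0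

def restrictUnitriangular [Zero R] [One R] (P : ι → ι → Prop) [DecidableRel P]
    (c : ι → ι → R) : Matrix ι ι R :=
  of fun i j => if i = j then 1 else if i < j ∧ P i j then c i j else 0

variable {P : ι → ι → Prop} [DecidableRel P]

theorem restrictUnitriangular_apply_of_lt [Zero R] [One R] (c : ι → ι → R) {i j : ι}
    (hij : i < j) : restrictUnitriangular P c i j = if P i j then c i j else 0 := by
  simp [restrictUnitriangular, hij.ne, hij]

theorem isUnitriangularWithin_restrictUnitriangular [Zero R] [One R] (c : ι → ι → R) :
    IsUnitriangularWithin P (restrictUnitriangular P c) := by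
  refine ⟨fun i j (hji : j < i) => ?_, fun i => by simp [restrictUnitriangular],
    fun i j hij hP => ?_⟩
  · simp [restrictUnitriangular, hji.ne', not_lt_of_gt hji]
  · simp [restrictUnitriangular_apply_of_lt c hij, hP]

theorem restrictUnitriangular_add_restrictUnitriangular_not [AddZeroClass R] [One R]
    (c : ι → ι → R) {i j : ι} (hij : i < j) :
    restrictUnitriangular P c i j + restrictUnitriangular (fun i j => ¬P i j) c i j = c i j := by
  rw [restrictUnitriangular_apply_of_lt c hij, restrictUnitriangular_apply_of_lt c hij]
  split_ifs <;> simp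

end LinearOrder

section Fin

variable {R : Type*} [Ring R] {n : ℕ}

theorem IsUnitriangularWithin.eq_of_mul_eq_mul {P : Fin n → Fin n → Prop}
    {a b a' b' : Matrix (Fin n) (Fin n) R}
    (ha : IsUnitriangularWithin P a) (hb : IsUnitriangularWithin (fun i j => ¬P i j) b)
    (ha' : IsUnitriangularWithin P a') (hb' : IsUnitriangularWithin (fun i j => ¬P i j) b')
    (h : a * b = a' * b') : a = a' ∧ b = b' := by
  suffices key : ∀ d, ∀ i j : Fin n, (j : ℕ) - i = d → a i j = a' i j ∧ b i j = b' i j from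
    ⟨ext fun i j => (key _ i j rfl).1, ext fun i j => (key _ i j rfl).2⟩
  intro d
  induction d using Nat.strong_induction_on with
  | _ d ih =>
  intro i j hd
  rcases lt_trichotomy i j with hij | rfl | hji
  · have hsum : ∑ k ∈ Ioo i j, a i k * b k j = ∑ k ∈ Ioo i j, a' i k * b' k j :=
      sum_congr rfl fun k hk => by
        have hk := mem_Ioo.1 hk
        rw [(ih _ (by omega) i k rfl).1, (ih _ (by omega) k j rfl).2]
    have hentry : b i j + a i j = b' i j + a' i j := by
      have := congr_fun₂ h i j
      rwa [ha.1.mul_apply_of_lt hb.1 ha.2.1 hb.2.1 hij,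
        ha'.1.mul_apply_of_lt hb'.1 ha'.2.1 hb'.2.1 hij, hsum, add_left_inj] at this
    by_cases hP : P i j
    · have hb₀ := hb.2.2 i j hij (not_not_intro hP)
      have hb₀' := hb'.2.2 i j hij (not_not_intro hP)
      rw [hb₀, hb₀', zero_add, zero_add] at hentry
      exact ⟨hentry, hb₀.trans hb₀'.symm⟩
    · have ha₀ := ha.2.2 i j hij hP
      have ha₀' := ha'.2.2 i j hij hP
      rw [ha₀, ha₀', add_zero, add_zero] at hentry
      exact ⟨ha₀.trans ha₀'.symm, hentry⟩
  · exact ⟨(ha.2.1 i).trans (ha'.2.1 i).symm, (hb.2.1 i).trans (hb'.2.1 i).symm⟩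
  · exact ⟨(ha.1 hji).trans (ha'.1 hji).symm, (hb.1 hji).trans (hb'.1 hji).symm⟩

variable (P : Fin n → Fin n → Prop) [DecidableRel P]

/-- The entries of both factors in one array: above the diagonal, the left factor keeps the
positions in `P` and the right factor the others. -/
def factorEntry (x : Matrix (Fin n) (Fin n) R) (i j : Fin n) : R :=
  x i j - ∑ k ∈ (Ioo i j).attach,
    (if P i k then factorEntry x i k else 0) * (if ¬P k j then factorEntry x k j else 0)
termination_by (j : ℕ) - i
decreasing_by all_goals have := mem_Ioo.1 k.2; omega

def leftFactor (x : Matrix (Fin n) (Fin n) R) : Matrix (Fin n) (Fin n) R :=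
  restrictUnitriangular P (factorEntry P x)

def rightFactor (x : Matrix (Fin n) (Fin n) R) : Matrix (Fin n) (Fin n) R :=
  restrictUnitriangular (fun i j => ¬P i j) (factorEntry P x)

theorem isUnitriangularWithin_leftFactor (x : Matrix (Fin n) (Fin n) R) :
    IsUnitriangularWithin P (leftFactor P x) :=
  isUnitriangularWithin_restrictUnitriangular _

theorem isUnitriangularWithin_rightFactor (x : Matrix (Fin n) (Fin n) R) :
    IsUnitriangularWithin (fun i j => ¬P i j) (rightFactor P x) :=
  isUnitriangularWithin_restrictUnitriangular _

theorem factorEntry_eq (x : Matrix (Fin n) (Fin n) R) (i j : Fin n) :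
    factorEntry P x i j = x i j - ∑ k ∈ Ioo i j, leftFactor P x i k * rightFactor P x k j := by
  rw [factorEntry, sum_attach (Ioo i j) fun k =>
    (if P i k then factorEntry P x i k else 0) * (if ¬P k j then factorEntry P x k j else 0)]
  refine congrArg _ (sum_congr rfl fun k hk => ?_)
  rw [mem_Ioo] at hk
  rw [leftFactor, rightFactor, restrictUnitriangular_apply_of_lt _ hk.1,
    restrictUnitriangular_apply_of_lt _ hk.2]

theorem leftFactor_add_rightFactor (x : Matrix (Fin n) (Fin n) R) {i j : Fin n} (hij : i < j) :
    leftFactor P x i j + rightFactor P x i j = factorEntry P x i j :=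
  restrictUnitriangular_add_restrictUnitriangular_not _ hij

theorem leftFactor_mul_rightFactor {x : Matrix (Fin n) (Fin n) R} (hx : x.BlockTriangular id)
    (hx₁ : ∀ i, x i i = 1) : leftFactor P x * rightFactor P x = x := by
  obtain ⟨hl, hl₁, -⟩ := isUnitriangularWithin_leftFactor P x
  obtain ⟨hr, hr₁, -⟩ := isUnitriangularWithin_rightFactor P x
  ext i j
  rcases lt_trichotomy i j with hij | rfl | hji
  · rw [hl.mul_apply_of_lt hr hl₁ hr₁ hij, add_comm (rightFactor P x i j),
      leftFactor_add_rightFactor P x hij, factorEntry_eq, sub_add_cancel]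
  · rw [hl.mul_apply_self hr, hl₁, hr₁, hx₁, one_mul]
  · rw [hl.mul hr hji, hx hji]

theorem existsUnique_mul_isUnitriangularWithin {x : Matrix (Fin n) (Fin n) R}
    (hx : x.BlockTriangular id) (hx₁ : ∀ i, x i i = 1) :
    ∃! p : Matrix (Fin n) (Fin n) R × Matrix (Fin n) (Fin n) R,
      IsUnitriangularWithin P p.1 ∧ IsUnitriangularWithin (fun i j => ¬P i j) p.2 ∧
        x = p.1 * p.2 := by
  have hfac := leftFactor_mul_rightFactor P hx hx₁
  refine ⟨(leftFactor P x, rightFactor P x), ⟨isUnitriangularWithin_leftFactor P x,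
    isUnitriangularWithin_rightFactor P x, hfac.symm⟩, fun ⟨a, b⟩ ⟨ha, hb, hab⟩ => ?_⟩
  obtain ⟨rfl, rfl⟩ := ha.eq_of_mul_eq_mul hb (isUnitriangularWithin_leftFactor P x)
    (isUnitriangularWithin_rightFactor P x) (hab.symm.trans hfac.symm)
  rfl

end Fin

theorem permMatrix_mul_mul_permMatrix {ι R : Type*} [Fintype ι] [DecidableEq ι]
    [NonAssocSemiring R] (σ τ : Equiv.Perm ι) (u : Matrix ι ι R) :
    σ.permMatrix R * u * τ.permMatrix R = u.submatrix σ τ.symm := by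
  rw [Equiv.Perm.permMatrix, PEquiv.toMatrix_toPEquiv_mul, PEquiv.mul_toMatrix_toPEquiv,
    submatrix_submatrix]
  rfl

end Matrix

theorem exists_eq_permMatrix_mul_mul_permMatrix_iff {ι R : Type*} [Fintype ι] [DecidableEq ι]
    [NonAssocSemiring R] {w : Equiv.Perm ι} (hw : Function.Involutive w)
    (T : Matrix ι ι R → Prop) (a : Matrix ι ι R) :
    (∃ u, T u ∧ a = w.permMatrix R * u * w.permMatrix R) ↔ T (a.submatrix w w) := by
  have hsymm : w.symm = w := Equiv.ext fun i => w.symm_apply_eq.2 (hw i).symm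
  simp only [permMatrix_mul_mul_permMatrix, hsymm]
  constructor
  · rintro ⟨u, hu, rfl⟩
    simpa [submatrix_submatrix, hw.comp_self] using hu
  · exact fun h => ⟨_, h, by simp [submatrix_submatrix, hw.comp_self]⟩

section Involution

variable {n : ℕ} {w : Equiv.Perm (Fin n)}

theorem isUniUpper_and_isUniUpper_transpose_submatrix_iff (hw : Function.Involutive w)
    (a : Matrix (Fin n) (Fin n) ℝ) :
    IsUniUpper a ∧ IsUniUpper (a.submatrix w w)ᵀ ↔
      IsUnitriangularWithin (fun i j => w j < w i) a := by
  constructor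
  · rintro ⟨⟨hlow, hdiag⟩, hT, -⟩
    refine ⟨fun i j h => hlow i j h, hdiag, fun i j hij hP => ?_⟩
    have hw' : w i < w j := (not_lt.1 hP).lt_of_ne (w.injective.ne hij.ne)
    simpa [hw i, hw j] using hT (w j) (w i) hw'
  · rintro ⟨hlow, hdiag, hpat⟩
    refine ⟨⟨fun i j h => hlow h, hdiag⟩, fun k l hlk => ?_, fun k => hdiag (w k)⟩
    simp only [transpose_apply, submatrix_apply]
    rcases lt_trichotomy (w l) (w k) with h | h | h
    · exact hpat _ _ h (by simpa [hw k, hw l] using hlk.le)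
    · exact absurd (w.injective h) hlk.ne
    · exact hlow h

theorem isUniUpper_and_isUniUpper_submatrix_iff (hw : Function.Involutive w)
    (a : Matrix (Fin n) (Fin n) ℝ) :
    IsUniUpper a ∧ IsUniUpper (a.submatrix w w) ↔
      IsUnitriangularWithin (fun i j => ¬w j < w i) a := by
  constructor
  · rintro ⟨⟨hlow, hdiag⟩, hS, -⟩
    refine ⟨fun i j h => hlow i j h, hdiag, fun i j hij hP => ?_⟩
    simpa [hw i, hw j] using hS (w i) (w j) (not_not.1 hP)
  · rintro ⟨hlow, hdiag, hpat⟩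
    refine ⟨⟨fun i j h => hlow h, hdiag⟩, fun k l hlk => ?_, fun k => hdiag (w k)⟩
    simp only [submatrix_apply]
    rcases lt_trichotomy (w k) (w l) with h | h | h
    · exact hpat _ _ h (by simpa [hw k, hw l] using hlk)
    · exact absurd (w.injective h) hlk.ne'
    · exact hlow h

end Involution

/-- Unique factorization `x = x₋ x₊` with `x₋ ∈ U⁻ = U ∩ wUᵀw` and `x₊ ∈ U⁺ = U ∩ wUw`,
for `w` an involutive permutation matrix. -/
theorem stmt8 (n : ℕ) (w : Equiv.Perm (Fin n)) (hw : w⁻¹ = w)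
    (x : Matrix (Fin n) (Fin n) ℝ) (hx : IsUniUpper x) :
    ∃! p : Matrix (Fin n) (Fin n) ℝ × Matrix (Fin n) (Fin n) ℝ,
      (IsUniUpper p.1 ∧ ∃ u, IsUniUpper uᵀ ∧ p.1 = w.permMatrix ℝ * u * w.permMatrix ℝ) ∧
      (IsUniUpper p.2 ∧ ∃ u, IsUniUpper u ∧ p.2 = w.permMatrix ℝ * u * w.permMatrix ℝ) ∧
      x = p.1 * p.2 := by
  have hinv : Function.Involutive w := fun i => by
    simpa only [hw] using Equiv.Perm.inv_eq_iff_eq.2 (rfl : w i = w i)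
  simp only [exists_eq_permMatrix_mul_mul_permMatrix_iff hinv,
    isUniUpper_and_isUniUpper_transpose_submatrix_iff hinv,
    isUniUpper_and_isUniUpper_submatrix_iff hinv]
  exact existsUnique_mul_isUnitriangularWithin _ hx.1 hx.2
end

section
/- Let v be an involutive permutation with a free rise (i,j) of type ff (i.e., i < j, v(i) = i, v(j) = j, and there is no k with i < k < j and i < v(k) < j). Then w = v · (i j) is an involution and the number of inversion classes |Inv(w)/∼| equals |Inv(v)/∼| + 1. -/
open Matrix

/-- The set of inversions of a permutation, as a subtype. -/
def InvSet {n : ℕ} (w : Equiv.Perm (Fin n)) :=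
  {p : Fin n × Fin n // p.1 < p.2 ∧ w p.2 < w p.1}

/-- The identification `(i,j) ∼ (w j, w i)` on inversions. -/
def invRel {n : ℕ} (w : Equiv.Perm (Fin n)) (p q : InvSet w) : Prop :=
  q.1 = p.1 ∨ q.1 = (w p.1.2, w p.1.1)

/-- The number of equivalence classes of inversions under `(i,j) ∼ (w j, w i)`. -/
noncomputable def invClassCount {n : ℕ} (w : Equiv.Perm (Fin n)) : ℕ :=
  Nat.card (Quot (invRel w))

/-
For an involution `u`, the inversion classes are the orbits of the involution
`(a, b) ↦ (u b, u a)` on `Inv(u)`, whose fixed points are the 2-cycles `(a, u a)` with `a < u a`;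
hence `2 |Inv(u)/∼| = |Inv(u)| + #{a | a < u a}`. Right multiplication by the transposition of a
free rise `(i, j)` adds exactly one inversion, `(i, j)` itself: relabelling positions by `(i j)`
matches the other inversions of `v (i j)` with those of `v`, except for the pairs `(i, k)`, `(k, j)`
with `i < k < j`, which keep their status because `v k` lies outside `(v i, v j)`. When `i` and `j`
are fixed by `v`, the product also gains exactly one 2-cycle, `(i j)`.
-/

open Finset Function

theorem Function.Involutive.two_mul_card_quot {α : Type*} [Finite α] {f : α → α}
    (hf : Involutive f) :
    2 * Nat.card (Quot fun x y : α => y = x ∨ y = f x) =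
      Nat.card α + Nat.card (fixedPoints f) := by
  classical
  set r : α → α → Prop := fun x y => y = x ∨ y = f x
  have hr : Equivalence r :=
    ⟨fun x => .inl rfl,
     fun {x y} h => h.elim (fun h => .inl h.symm) (fun h => .inr (by rw [h, hf])),
     fun {x y z} hxy hyz => by
       rcases hxy with rfl | rfl <;> rcases hyz with rfl | rfl
       exacts [.inl rfl, .inr rfl, .inr rfl, .inl (hf x)]⟩
  have hfiber (x a : α) : Quot.mk r x = Quot.mk r a ↔ x = a ∨ x = f a := by
    rw [Quot.eq, hr.eqvGen_iff]
    constructor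
    · rintro (rfl | rfl)
      exacts [.inl rfl, .inr (hf x).symm]
    · rintro (rfl | rfl)
      exacts [.inl rfl, .inr (hf a).symm]
  have : Fintype α := Fintype.ofFinite α
  have : Fintype (Quot r) := Fintype.ofFinite _
  have hsum (q : Quot r) :
      ∑ x ∈ univ.filter (fun x => Quot.mk r x = q), (1 + if f x = x then 1 else 0) = 2 := by
    induction q using Quot.ind with | _ a => ?_
    have hs : univ.filter (fun x => Quot.mk r x = Quot.mk r a) = {a, f a} := by
      ext x; simp [hfiber]
    rw [hs]
    by_cases ha : f a = a
    · simp [ha]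
    · rw [sum_pair (Ne.symm ha), if_neg ha, if_neg (by rwa [hf a, eq_comm])]
  calc 2 * Nat.card (Quot r)
      = ∑ q : Quot r, ∑ x ∈ univ.filter (fun x => Quot.mk r x = q),
          (1 + if f x = x then 1 else 0) := by simp [hsum, mul_comm]
    _ = ∑ x : α, (1 + if f x = x then 1 else 0) := sum_fiberwise _ _ _
    _ = Nat.card α + Nat.card (fixedPoints f) := by
      rw [sum_add_distrib, ← Finset.card_filter, Nat.card_eq_fintype_card,
        Nat.card_eq_fintype_card, Fintype.card_subtype]
      simp [fixedPoints, IsFixedPt]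

namespace Equiv.Perm

lemma mul_swap_involutive {α : Type*} [DecidableEq α] {v : Perm α} {i j : α}
    (hv : Involutive v) (hi : v i = i) (hj : v j = j) : Involutive (v * swap i j) := by
  have hcomm (x : α) : swap i j (v x) = v (swap i j x) := by
    simpa [hi, hj] using (congrArg (· x) (mul_swap_eq_swap_mul v i j)).symm
  intro x
  simp only [Perm.mul_apply, hcomm, swap_apply_self, hv x]

section LinearOrder

variable {α : Type*} [LinearOrder α] {v : Perm α} {i j : α}

def IsFreeRise (v : Perm α) (i j : α) : Prop :=
  i < j ∧ v i < v j ∧ ∀ k, i < k → k < j → ¬(v i < v k ∧ v k < v j)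

lemma IsFreeRise.apply_lt_left_iff_apply_lt_right (h : IsFreeRise v i j) {k : α} (hik : i < k)
    (hkj : k < j) :
    v k < v i ↔ v k < v j := by
  have hne : v k ≠ v i := v.injective.ne hik.ne'
  have := h.2.2 k hik hkj
  constructor
  · exact fun hk => hk.trans h.2.1
  · intro hk
    exact lt_of_le_of_ne (not_lt.1 fun hlt => this ⟨hlt, hk⟩) hne

-- On increasing pairs, this fixes exactly the inversions of `swap i j`.
def swapPair (i j : α) (p : α × α) : α × α :=
  if swap i j p.1 < swap i j p.2 then (swap i j p.1, swap i j p.2) else p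

lemma swapPair_fst_lt_snd {p : α × α} (hp : p.1 < p.2) :
    (swapPair i j p).1 < (swapPair i j p).2 := by
  unfold swapPair
  split_ifs <;> assumption

lemma swapPair_swapPair {p : α × α} (hp : p.1 < p.2) : swapPair i j (swapPair i j p) = p := by
  unfold swapPair
  split_ifs <;> simp_all

lemma eq_left_or_eq_right_of_not_swap_lt_swap (hij : i < j) {a b : α} (hab : a < b)
    (h : ¬swap i j a < swap i j b) : (a = i ∧ b ≤ j) ∨ (i ≤ a ∧ b = j) := by
  rw [swap_apply_def, swap_apply_def] at h
  split_ifs at h <;> grind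

variable [Fintype α]

def invFinset (u : Perm α) : Finset (α × α) :=
  univ.filter fun p => p.1 < p.2 ∧ u p.2 < u p.1

@[simp]
lemma mem_invFinset {u : Perm α} {p : α × α} :
    p ∈ invFinset u ↔ p.1 < p.2 ∧ u p.2 < u p.1 := by
  simp [invFinset]

lemma IsFreeRise.mem_invFinset_mul_swap_iff (h : IsFreeRise v i j) {p : α × α} (hp : p.1 < p.2)
    (hne : p ≠ (i, j)) : p ∈ invFinset (v * swap i j) ↔ swapPair i j p ∈ invFinset v := by
  obtain ⟨a, b⟩ := p
  unfold swapPair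
  split_ifs with hs
  · simp_all
  obtain ⟨hai, hbj⟩ | ⟨hia, hbj⟩ := eq_left_or_eq_right_of_not_swap_lt_swap h.1 hp hs
  · subst hai
    have hbj : b < j := lt_of_le_of_ne hbj (by rintro rfl; exact hne rfl)
    simp [hp, swap_apply_of_ne_of_ne hp.ne' hbj.ne, h.apply_lt_left_iff_apply_lt_right hp hbj]
  · subst hbj
    have hia : i < a := lt_of_le_of_ne hia (by rintro rfl; exact hne rfl)
    have h1 : v a ≠ v i := v.injective.ne hia.ne'
    have h2 : v a ≠ v b := v.injective.ne hp.ne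
    simp only [mem_invFinset, Perm.mul_apply, swap_apply_right,
      swap_apply_of_ne_of_ne hia.ne' hp.ne, hp, true_and]
    rw [← not_iff_not, not_lt, not_lt, h1.le_iff_lt, h2.le_iff_lt,
      h.apply_lt_left_iff_apply_lt_right hia hp]

theorem IsFreeRise.card_invFinset_mul_swap (h : IsFreeRise v i j) :
    #(invFinset (v * swap i j)) = #(invFinset v) + 1 := by
  have hij : (i, j) ∈ invFinset (v * swap i j) := by simp [h.1, h.2.1]
  have hij' : swapPair i j (i, j) = (i, j) := by simp [swapPair, h.1.not_gt]
  rw [← card_erase_add_one hij]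
  congr 1
  refine card_nbij' (swapPair i j) (swapPair i j) ?_ ?_ ?_ ?_
  · intro p hp
    simp only [coe_erase, Set.mem_sdiff, mem_coe, Set.mem_singleton_iff] at hp
    exact (h.mem_invFinset_mul_swap_iff (mem_filter.1 hp.1).2.1 hp.2).1 hp.1
  · intro q hq
    have hq' : q.1 < q.2 := (mem_invFinset.1 hq).1
    have hne : swapPair i j q ≠ (i, j) := by
      intro he
      have hqij : q = (i, j) := by rw [← swapPair_swapPair hq', he, hij']
      rw [mem_coe, hqij, mem_invFinset] at hq
      exact h.2.1.not_gt hq.2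
    refine mem_erase.2 ⟨hne, (h.mem_invFinset_mul_swap_iff (swapPair_fst_lt_snd hq') hne).2 ?_⟩
    rwa [swapPair_swapPair hq']
  · exact fun p hp => swapPair_swapPair (mem_filter.1 (mem_of_mem_erase hp)).2.1
  · exact fun q hq => swapPair_swapPair (mem_filter.1 hq).2.1

lemma card_filter_lt_mul_swap (hij : i < j) (hi : v i = i) (hj : v j = j) :
    #(univ.filter fun a => a < (v * swap i j) a) = #(univ.filter fun a => a < v a) + 1 := by
  rw [← card_insert_of_notMem (s := univ.filter fun a => a < v a) (a := i) (by simp [hi])]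
  congr 1
  ext a
  simp only [mem_insert, mem_filter, mem_univ, true_and]
  rw [Perm.mul_apply]
  by_cases hai : a = i
  · simp [hai, hj, hij]
  by_cases haj : a = j
  · simp [haj, hi, hj, hij.ne', hij.not_gt]
  simp [hai, swap_apply_of_ne_of_ne hai haj]

end LinearOrder

variable {n : ℕ}

instance (u : Perm (Fin n)) : Finite (InvSet u) := Subtype.finite

lemma card_invSet (u : Perm (Fin n)) : Nat.card (InvSet u) = #(invFinset u) := by
  rw [InvSet, Nat.card_eq_fintype_card, Fintype.card_subtype]
  rfl

def invPartner {u : Perm (Fin n)} (hu : Involutive u) (p : InvSet u) : InvSet u :=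
  ⟨(u p.1.2, u p.1.1), p.2.2, by simpa only [hu _] using p.2.1⟩

lemma invPartner_involutive {u : Perm (Fin n)} (hu : Involutive u) :
    Involutive (invPartner hu) :=
  fun _ => Subtype.ext (Prod.ext (hu _) (hu _))

lemma invRel_eq {u : Perm (Fin n)} (hu : Involutive u) :
    invRel u = fun p q => q = p ∨ q = invPartner hu p := by
  ext p q
  exact or_congr (Subtype.ext_iff (a1 := q) (a2 := p)).symm
    (Subtype.ext_iff (a1 := q) (a2 := invPartner hu p)).symm

lemma apply_fst_of_isFixedPt_invPartner {u : Perm (Fin n)} (hu : Involutive u) {p : InvSet u}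
    (hp : IsFixedPt (invPartner hu) p) : u p.1.1 = p.1.2 :=
  congrArg (fun q => q.1.2) hp

def fixedPointsInvPartnerEquiv {u : Perm (Fin n)} (hu : Involutive u) :
    fixedPoints (invPartner hu) ≃ {a : Fin n // a < u a} where
  toFun p := ⟨p.1.1.1, by rw [apply_fst_of_isFixedPt_invPartner hu p.2]; exact p.1.2.1⟩
  invFun a :=
    ⟨⟨(a, u a), a.2, by rw [hu a.1]; exact a.2⟩, Subtype.ext (Prod.ext (hu a.1) rfl)⟩
  left_inv p := Subtype.ext (Subtype.ext (Prod.ext rfl (apply_fst_of_isFixedPt_invPartner hu p.2)))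
  right_inv _ := rfl

theorem two_mul_invClassCount {u : Perm (Fin n)} (hu : Involutive u) :
    2 * invClassCount u = #(invFinset u) + #(univ.filter fun a => a < u a) := by
  rw [invClassCount, invRel_eq hu, (invPartner_involutive hu).two_mul_card_quot, card_invSet,
    Nat.card_congr (fixedPointsInvPartnerEquiv hu), Nat.card_eq_fintype_card,
    Fintype.card_subtype]

end Equiv.Perm

/-- If `v` is an involution with a free rise `(i,j)` of type `ff`, then `w = v·(i j)` is an
involution and its number of inversion classes is one more than that of `v`. -/
theorem stmt11 (n : ℕ) (v : Equiv.Perm (Fin n)) (hv : ∀ i, v (v i) = i)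
    (i j : Fin n) (hij : i < j) (hi : v i = i) (hj : v j = j)
    (hfree : ¬ ∃ k : Fin n, i < k ∧ k < j ∧ i < v k ∧ v k < j) :
    (∀ x, (v * Equiv.swap i j) ((v * Equiv.swap i j) x) = x) ∧
    invClassCount (v * Equiv.swap i j) = invClassCount v + 1 := by
  have hw : Involutive (v * Equiv.swap i j) := Equiv.Perm.mul_swap_involutive hv hi hj
  have hrise : v.IsFreeRise i j :=
    ⟨hij, by rwa [hi, hj], fun k hik hkj hk =>
      hfree ⟨k, hik, hkj, by simpa [hi, hj] using hk⟩⟩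
  have hcount_w := Equiv.Perm.two_mul_invClassCount hw
  have hcount_v := Equiv.Perm.two_mul_invClassCount hv
  rw [hrise.card_invFinset_mul_swap, Equiv.Perm.card_filter_lt_mul_swap hij hi hj] at hcount_w
  exact ⟨hw, by omega⟩
end

section
/- Let e, f, g, t ∈ ℝ with e² + f² + g² = 1, t = 1 − e², f² (1 + e²) = e² (1 − e²), f = εδ e g for signs ε, δ ∈ {±1}. Then the 4×4 symmetric matrix Q with rows (0, e, f, g), (e, δt, −δef, −εf), (f, −δef, −δt, εe), (g, −εf, εe, 0) satisfies Q² = I. -/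
/-! Since `Q` is symmetric, `Q * Q = 1` says that its rows are orthonormal. The first and last
rows are unit vectors by `e² + f² + g² = 1`, the two middle rows by the Richardson relation
`f² (1 + e²) = e² (1 - e²)`, and every orthogonality relation follows from `f = ε δ e g`
together with `ε² = δ² = 1`. -/

open Matrix

def crossingEEMatrix {R : Type*} [Ring R] (ε δ e f g t : R) : Matrix (Fin 4) (Fin 4) R :=
  !![0, e, f, g;
     e, δ * t, -δ * e * f, -ε * f;
     f, -δ * e * f, -δ * t, ε * e;
     g, -ε * f, ε * e, 0]

theorem crossingEEMatrix_mul_self {R : Type*} [CommRing R] {ε δ e f g t : R}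
    (hε : ε ^ 2 = 1) (hδ : δ ^ 2 = 1) (hsum : e ^ 2 + f ^ 2 + g ^ 2 = 1) (ht : t = 1 - e ^ 2)
    (hf : f ^ 2 * (1 + e ^ 2) = e ^ 2 * (1 - e ^ 2)) (hfg : f = ε * δ * e * g) :
    crossingEEMatrix ε δ e f g t * crossingEEMatrix ε δ e f g t = 1 := by
  subst ht
  have hεf : ε * f = δ * e * g := by linear_combination ε * hfg + δ * e * g * hε
  have hδf : δ * f = ε * e * g := by linear_combination δ * hfg + ε * e * g * hδ
  ext i j
  fin_cases i <;> fin_cases j <;>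
    simp only [crossingEEMatrix, mul_apply, Fin.sum_univ_four, of_apply, cons_val', cons_val_fin_one,
      cons_val_zero, cons_val_one, cons_val, Fin.isValue, Fin.zero_eta, Fin.mk_one, Fin.reduceFinMk,
      Fin.reduceEq, one_apply_eq, one_apply_ne, ne_eq, not_false_eq_true, zero_ne_one, one_ne_zero]
  · linear_combination hsum
  · linear_combination -δ * e * hsum - g * hεf
  · linear_combination -hδf
  · ring
  · linear_combination -δ * e * hsum - g * hεf
  · linear_combination hf + ((1 - e ^ 2) ^ 2 + e ^ 2 * f ^ 2) * hδ + f ^ 2 * hε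
  · linear_combination -e * f * hε
  · linear_combination -e * g * hδ - δ * hεf
  · linear_combination -hδf
  · linear_combination -e * f * hε
  · linear_combination hf + ((1 - e ^ 2) ^ 2 + e ^ 2 * f ^ 2) * hδ + e ^ 2 * hε
  · linear_combination g * hfg + ε * δ * e * hsum
  · ring
  · linear_combination -e * g * hδ - δ * hεf
  · linear_combination g * hfg + ε * δ * e * hsum
  · linear_combination hsum + (e ^ 2 + f ^ 2) * hε

/-- The crossing `ee`-case Richardson curve: under the stated relations the 4×4 symmetric
matrix `Q` is an involution. -/
theorem stmt15 (e f g t ε δ : ℝ)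
    (hsum : e ^ 2 + f ^ 2 + g ^ 2 = 1) (ht : t = 1 - e ^ 2)
    (hf : f ^ 2 * (1 + e ^ 2) = e ^ 2 * (1 - e ^ 2)) (hfg : f = ε * δ * e * g)
    (hε : ε = 1 ∨ ε = -1) (hδ : δ = 1 ∨ δ = -1) :
    let Q : Matrix (Fin 4) (Fin 4) ℝ :=
      !![0, e, f, g;
         e, δ * t, -δ * e * f, -ε * f;
         f, -δ * e * f, -δ * t, ε * e;
         g, -ε * f, ε * e, 0]
    Q * Q = 1 :=
  crossingEEMatrix_mul_self (sq_eq_one_iff.mpr hε) (sq_eq_one_iff.mpr hδ) hsum ht hf hfg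
end

section
/- The map π : Z ↦ θ Z θ⁻¹, where θ is the upper-triangular factor with positive diagonal in the Cholesky decomposition θᵀθ = I + Zᵀ Z, sends every invertible involution Z (Z² = I) to an orthogonal involution: π(Z)² = I and π(Z) ∈ O(n). Moreover π(Z) = Z whenever Z is already an orthogonal involution. -/
/-!
Conjugation by `θ` turns `Z` into an isometry of the standard form exactly when `Z` is an
isometry of the Gram form `θᵀθ`, and an involution `Z` is always an isometry of `1 + ZᵀZ`.
If `Z` is already orthogonal then `θᵀθ = 2`, so `θ⁻¹ = θᵀ / 2` is both upper and lower
triangular; hence `θ` is the scalar matrix `√2`, which commutes with `Z`.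
-/

open Matrix

namespace Matrix

variable {m R : Type*} [Fintype m] [DecidableEq m]

section CommRing

variable [CommRing R]

theorem conj_mul_conj_of_mul_self_eq_one {θ Z : Matrix m m R} (hθ : IsUnit θ.det)
    (hZ : Z * Z = 1) : θ * Z * θ⁻¹ * (θ * Z * θ⁻¹) = 1 := by
  calc θ * Z * θ⁻¹ * (θ * Z * θ⁻¹) = θ * Z * (θ⁻¹ * θ) * Z * θ⁻¹ := by simp only [mul_assoc]
    _ = 1 := by rw [nonsing_inv_mul θ hθ, mul_one, mul_assoc θ Z Z, hZ, mul_one,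
      mul_nonsing_inv θ hθ]

theorem transpose_mul_self_conj_eq_one {θ Z : Matrix m m R} (hθ : IsUnit θ.det)
    (hZ : Zᵀ * (θᵀ * θ) * Z = θᵀ * θ) : (θ * Z * θ⁻¹)ᵀ * (θ * Z * θ⁻¹) = 1 := by
  calc (θ * Z * θ⁻¹)ᵀ * (θ * Z * θ⁻¹) = θ⁻¹ᵀ * (Zᵀ * (θᵀ * θ) * Z) * θ⁻¹ := by
        simp only [transpose_mul, mul_assoc]
    _ = (θ * θ⁻¹)ᵀ * (θ * θ⁻¹) := by rw [hZ]; simp only [transpose_mul, mul_assoc]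
    _ = 1 := by rw [mul_nonsing_inv θ hθ, transpose_one, one_mul]

theorem transpose_mul_one_add_transpose_mul_self_mul {Z : Matrix m m R} (hZ : Z * Z = 1) :
    Zᵀ * (1 + Zᵀ * Z) * Z = 1 + Zᵀ * Z := by
  have hZt : Zᵀ * Zᵀ = 1 := by rw [← transpose_mul, hZ, transpose_one]
  calc Zᵀ * (1 + Zᵀ * Z) * Z = Zᵀ * Z + Zᵀ * Zᵀ * (Z * Z) := by noncomm_ring
    _ = 1 + Zᵀ * Z := by rw [hZt, hZ, one_mul, add_comm]

end CommRing

theorem IsUpperTriangular.isDiag_of_transpose_mul_self_eq_smul_one [LinearOrder m] [Field R]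
    {θ : Matrix m m R} (htri : θ.IsUpperTriangular) {c : R} (hc : c ≠ 0)
    (h : θᵀ * θ = c • 1) : θ.IsDiag := by
  have hleft : (c⁻¹ • θᵀ) * θ = 1 := by rw [smul_mul, h, smul_smul, inv_mul_cancel₀ hc, one_smul]
  have hinv : θ⁻¹ = c⁻¹ • θᵀ := inv_eq_left_inv hleft
  have : Invertible θ := invertibleOfLeftInverse θ _ hleft
  have hinvtri : θ⁻¹.IsUpperTriangular := blockTriangular_inv_of_blockTriangular htri
  intro i j hij
  rcases lt_or_gt_of_ne hij with hlt | hgt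
  · have hzero := hinvtri (show id i < id j from hlt)
    rw [hinv, smul_apply, transpose_apply, smul_eq_mul] at hzero
    exact (mul_eq_zero.mp hzero).resolve_left (inv_ne_zero hc)
  · exact htri hgt

theorem IsDiag.eq_sqrt_smul_one_of_transpose_mul_self_eq_smul_one {θ : Matrix m m ℝ}
    (hdiag : θ.IsDiag) (hpos : ∀ i, 0 < θ i i) {c : ℝ} (h : θᵀ * θ = c • 1) :
    θ = √c • 1 := by
  rw [← hdiag.diagonal_diag, diagonal_transpose, diagonal_mul_diagonal, smul_one_eq_diagonal] at h
  rw [← hdiag.diagonal_diag, smul_one_eq_diagonal]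
  congr 1
  funext i
  have hsq : θ i i ^ 2 = c := by simpa [sq] using congrFun (diagonal_injective h) i
  rw [diag_apply, ← hsq, Real.sqrt_sq (hpos i).le]

end Matrix

/-- The projection `π : Z ↦ θ Z θ⁻¹`, with `θᵀθ = I + ZᵀZ` the Cholesky factor, sends every
invertible involution to an orthogonal involution and fixes orthogonal involutions. -/
theorem stmt16 (n : ℕ) (Z θ : Matrix (Fin n) (Fin n) ℝ)
    (hZ : Z * Z = 1)
    (hθtri : ∀ i j : Fin n, j < i → θ i j = 0) (hθpos : ∀ i : Fin n, 0 < θ i i)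
    (hθ : θᵀ * θ = 1 + Zᵀ * Z) :
    (θ * Z * θ⁻¹) * (θ * Z * θ⁻¹) = 1 ∧
    (θ * Z * θ⁻¹)ᵀ * (θ * Z * θ⁻¹) = 1 ∧
    (Zᵀ * Z = 1 → θ * Z * θ⁻¹ = Z) := by
  have htri : θ.IsUpperTriangular := fun i j h => hθtri i j h
  have hunit : IsUnit θ.det := by
    rw [det_of_isUpperTriangular htri]
    exact (Finset.prod_pos fun i _ => hθpos i).ne'.isUnit
  refine ⟨conj_mul_conj_of_mul_self_eq_one hunit hZ, transpose_mul_self_conj_eq_one hunit ?_,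
    fun hO => ?_⟩
  · rw [hθ]
    exact transpose_mul_one_add_transpose_mul_self_mul hZ
  · have hθ2 : θᵀ * θ = (2 : ℝ) • 1 := by rw [hθ, hO, two_smul]
    have hscalar : θ = √2 • 1 :=
      (htri.isDiag_of_transpose_mul_self_eq_smul_one two_ne_zero hθ2
        ).eq_sqrt_smul_one_of_transpose_mul_self_eq_smul_one hθpos hθ2
    have hcomm : θ * Z = Z * θ := by rw [hscalar, smul_mul, Matrix.mul_smul, one_mul, mul_one]
    rw [hcomm, mul_assoc, mul_nonsing_inv θ hunit, mul_one]
end
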